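/- arXiv:0805.0184 — 3 statements merged into one kernel-verified Lean document; each statement's English description precedes it below -/
import Mathlib

section
/- The spectral density f(ω₁,ω₂) = 1/(4π²κ(1 − 2ζcos ω₁ − 2ζcos ω₂)) of the SFCAR model with precision κ > 0 and edge dependence factor 0 ≤ ζ < 1/4 is strictly positive on (−π,π]² and integrable, and its integral over (−π,π]² (the signal power P_s = γ₀₀) equals (2/(πκ))·K(4ζ), where K is the complete elliptic integral of the first kind. -/
/-!
Substituting `y = x + s` in the inner integral and using `cos x + cos (x + s) =
2 cos (s/2) cos (x + s/2)`, then exchanging the order of integration, the inner integral becomes a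
full period of `(1 - b cos x)⁻¹` with `b = 4ζ cos (s/2)`, which equals `2π / √(1 - b²)`
(antiderivative `2 / √(1 - b²) · arctan (√((1 + b) / (1 - b)) tan (x/2))`). The remaining integral
`∫ 2π / √(1 - 16ζ² cos² (s/2)) ds` over `[-π, π]` is `8π K(4ζ)` after `s = 2θ`, evenness and
`θ ↦ π/2 - θ`.
-/

open Real MeasureTheory

noncomputable def ellipticK (k : ℝ) : ℝ :=
  ∫ θ in Set.Ioc 0 (π/2), 1 / Real.sqrt (1 - k ^ 2 * Real.sin θ ^ 2)

open intervalIntegral Filter Topology Set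

theorem abs_mul_cos_le (b x : ℝ) : |b * cos x| ≤ |b| := by
  rw [abs_mul]
  exact mul_le_of_le_one_right (abs_nonneg b) (abs_cos_le_one x)

theorem one_sub_mul_cos_pos {b : ℝ} (hb : |b| < 1) (x : ℝ) : 0 < 1 - b * cos x := by
  linarith [le_abs_self (b * cos x), abs_mul_cos_le b x]

theorem one_sub_two_mul_cos_sub_two_mul_cos_pos {ζ : ℝ} (hζ : |ζ| < 1 / 4) (x y : ℝ) :
    0 < 1 - 2 * ζ * cos x - 2 * ζ * cos y := by
  linarith [le_abs_self (ζ * cos x), abs_mul_cos_le ζ x, le_abs_self (ζ * cos y),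
    abs_mul_cos_le ζ y]

section

variable {E : Type*} [NormedAddCommGroup E]

theorem integrableOn_Ioc_prod_Ioc {f : ℝ × ℝ → E} (hf : Continuous f) (a b c d : ℝ) :
    IntegrableOn f (Ioc a b ×ˢ Ioc c d) :=
  (hf.continuousOn.integrableOn_compact (isCompact_Icc.prod isCompact_Icc)).mono_set
    (prod_mono Ioc_subset_Icc_self Ioc_subset_Icc_self)

variable [NormedSpace ℝ E]

theorem Function.Periodic.intervalIntegral_comp_add_right {f : ℝ → E} {T : ℝ}
    (hf : Function.Periodic f T) (t c : ℝ) :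
    ∫ x in t..t + T, f (x + c) = ∫ x in t..t + T, f x := by
  rw [integral_comp_add_right, add_right_comm, hf.intervalIntegral_add_eq (t + c) t]

theorem Function.Periodic.integral_neg_pi_pi_comp_add_right {f : ℝ → E}
    (hf : Function.Periodic f (2 * π)) (c : ℝ) :
    ∫ x in (-π)..π, f (x + c) = ∫ x in (-π)..π, f x := by
  simpa [show -π + 2 * π = π by ring] using hf.intervalIntegral_comp_add_right (-π) c

theorem setIntegral_Ioc_prod_Ioc {f : ℝ × ℝ → E} (hf : Continuous f) {a b c d : ℝ}
    (hab : a ≤ b) (hcd : c ≤ d) :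
    ∫ ω in Ioc a b ×ˢ Ioc c d, f ω = ∫ x in a..b, ∫ y in c..d, f (x, y) := by
  rw [Measure.volume_eq_prod, setIntegral_prod _ (integrableOn_Ioc_prod_Ioc hf a b c d),
    integral_of_le hab]
  simp_rw [integral_of_le hcd]

theorem intervalIntegral_integral_swap {f : ℝ → ℝ → E} (hf : Continuous (Function.uncurry f))
    {a b c d : ℝ} (hab : a ≤ b) (hcd : c ≤ d) :
    ∫ x in a..b, ∫ y in c..d, f x y = ∫ y in c..d, ∫ x in a..b, f x y := by
  simp_rw [integral_of_le hab, integral_of_le hcd]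
  refine integral_integral_swap ?_
  rw [Measure.prod_restrict, ← Measure.volume_eq_prod]
  exact integrableOn_Ioc_prod_Ioc hf a b c d

theorem integral_comp_cos_half {g : ℝ → E} (hg : ContinuousOn g (Icc (-1) 1)) :
    ∫ s in (-π)..π, g (cos (s / 2)) = (4 : ℝ) • ∫ θ in 0..π / 2, g (sin θ) := by
  have hgc : Continuous (fun θ => g (cos θ)) :=
    hg.comp_continuous continuous_cos fun θ => ⟨neg_one_le_cos θ, cos_le_one θ⟩
  have hsymm : ∫ θ in (-(π / 2))..0, g (cos θ) = ∫ θ in 0..π / 2, g (cos θ) := by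
    simpa using (integral_comp_neg (a := 0) (b := π / 2) fun θ => g (cos θ)).symm
  have hrefl : ∫ θ in 0..π / 2, g (cos θ) = ∫ θ in 0..π / 2, g (sin θ) := by
    simpa [sin_pi_div_two_sub] using
      integral_comp_sub_left (a := 0) (b := π / 2) (fun θ => g (sin θ)) (π / 2)
  rw [integral_comp_div (fun θ => g (cos θ)) two_ne_zero, neg_div,
    ← integral_add_adjacent_intervals (b := 0) (hgc.intervalIntegrable _ _)
      (hgc.intervalIntegrable _ _), hsymm, hrefl]
  module

end

theorem ellipticK_eq_intervalIntegral (k : ℝ) :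
    ellipticK k = ∫ θ in 0..π / 2, (√(1 - (k * sin θ) ^ 2))⁻¹ := by
  rw [ellipticK, integral_of_le (by positivity)]
  simp_rw [one_div, mul_pow]
theorem hasDerivAt_arctan_mul_tan_half {b : ℝ} (hb : |b| < 1) {x : ℝ} (hx : x ∈ Ioo (-π) π) :
    HasDerivAt (fun y => 2 / √(1 - b ^ 2) * arctan (√((1 + b) / (1 - b)) * tan (y / 2)))
      (1 - b * cos x)⁻¹ x := by
  obtain ⟨hb₁, hb₂⟩ := abs_lt.1 hb
  have hratio : 0 < (1 + b) / (1 - b) := div_pos (by linarith) (by linarith)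
  set c := √((1 + b) / (1 - b))
  have hc2 : c ^ 2 = (1 + b) / (1 - b) := sq_sqrt hratio.le
  have hcb : √(1 - b ^ 2) = c * (1 - b) := by
    rw [show 1 - b ^ 2 = (1 + b) / (1 - b) * (1 - b) ^ 2 by field_simp; ring,
      sqrt_mul hratio.le, sqrt_sq (by linarith)]
  have hcos : 0 < cos (x / 2) := cos_pos_of_mem_Ioo ⟨by linarith [hx.1], by linarith [hx.2]⟩
  have htan : HasDerivAt (fun y => tan (y / 2)) (1 / cos (x / 2) ^ 2 * (1 / 2)) x :=
    HasDerivAt.comp (h₂ := tan) x (hasDerivAt_tan hcos.ne') ((hasDerivAt_id' x).div_const 2)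
  have hderiv := (htan.const_mul c).arctan.const_mul (2 / √(1 - b ^ 2))
  refine hderiv.congr_deriv ?_
  have hcosx : cos x = cos (x / 2) ^ 2 - sin (x / 2) ^ 2 := by
    rw [← cos_two_mul', mul_div_cancel₀ x two_ne_zero]
  have hden := one_sub_mul_cos_pos hb x
  have hc2' : c ^ 2 * (1 - b) = 1 + b := by rw [hc2]; field_simp
  have hc : 0 < c := sqrt_pos.2 hratio
  rw [hcosx] at hden ⊢
  rw [tan_eq_sin_div_cos, hcb]
  field_simp
  linear_combination (-1 : ℝ) * sin_sq_add_cos_sq (x / 2) - sin (x / 2) ^ 2 * hc2'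

theorem tendsto_arctan_mul_tan_half_left {c : ℝ} (hc : 0 < c) :
    Tendsto (fun x => arctan (c * tan (x / 2))) (𝓝[<] π) (𝓝 (π / 2)) := by
  have hhalf : Tendsto (fun x : ℝ => x / 2) (𝓝[<] π) (𝓝[<] (π / 2)) :=
    (continuous_id.div_const 2).continuousWithinAt.tendsto_nhdsWithin
      fun x (hx : x < π) => show x / 2 < π / 2 by linarith
  exact (tendsto_arctan_atTop.mono_right nhdsWithin_le_nhds).comp
    ((tendsto_tan_pi_div_two.comp hhalf).const_mul_atTop hc)

theorem tendsto_arctan_mul_tan_half_right {c : ℝ} (hc : 0 < c) :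
    Tendsto (fun x => arctan (c * tan (x / 2))) (𝓝[>] (-π)) (𝓝 (-(π / 2))) := by
  have hhalf : Tendsto (fun x : ℝ => x / 2) (𝓝[>] (-π)) (𝓝[>] (-(π / 2))) := by
    rw [← neg_div]
    exact (continuous_id.div_const 2).continuousWithinAt.tendsto_nhdsWithin
      fun x (hx : -π < x) => show -π / 2 < x / 2 by linarith
  exact (tendsto_arctan_atBot.mono_right nhdsWithin_le_nhds).comp
    ((tendsto_tan_neg_pi_div_two.comp hhalf).const_mul_atBot hc)

theorem integral_inv_one_sub_mul_cos {b : ℝ} (hb : |b| < 1) :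
    ∫ x in (-π)..π, (1 - b * cos x)⁻¹ = 2 * π / √(1 - b ^ 2) := by
  obtain ⟨hb₁, hb₂⟩ := abs_lt.1 hb
  have hc : 0 < √((1 + b) / (1 - b)) := sqrt_pos.2 (div_pos (by linarith) (by linarith))
  have hcont : Continuous fun x => (1 - b * cos x)⁻¹ :=
    (continuous_const.sub (continuous_const.mul continuous_cos)).inv₀
      fun x => (one_sub_mul_cos_pos hb x).ne'
  rw [integral_eq_sub_of_hasDerivAt_of_tendsto (by linarith [pi_pos])
    (fun x hx => hasDerivAt_arctan_mul_tan_half hb hx) (hcont.intervalIntegrable _ _)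
    ((tendsto_arctan_mul_tan_half_right hc).const_mul _)
    ((tendsto_arctan_mul_tan_half_left hc).const_mul _)]
  ring

theorem integral_integral_inv_one_sub_two_mul_cos_sub_two_mul_cos {ζ : ℝ} (hζ : |ζ| < 1 / 4) :
    ∫ x in (-π)..π, ∫ y in (-π)..π, (1 - 2 * ζ * cos x - 2 * ζ * cos y)⁻¹
      = 8 * π * ellipticK (4 * ζ) := by
  have hb : ∀ t, |t| ≤ 1 → |4 * ζ * t| < 1 := fun t ht => by
    rw [abs_mul, abs_mul, abs_of_pos four_pos]
    nlinarith [abs_nonneg ζ, abs_nonneg t]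
  have hshift : ∀ x, ∫ y in (-π)..π, (1 - 2 * ζ * cos x - 2 * ζ * cos y)⁻¹
      = ∫ s in (-π)..π, (1 - 4 * ζ * cos (s / 2) * cos (x + s / 2))⁻¹ := fun x => by
    refine ((cos_periodic.comp fun t => (1 - 2 * ζ * cos x - 2 * ζ * t)⁻¹
      ).integral_neg_pi_pi_comp_add_right x).symm.trans (integral_congr fun s _ => ?_)
    have h := cos_add_cos x (s + x)
    rw [show (x + (s + x)) / 2 = x + s / 2 by ring, show (x - (s + x)) / 2 = -(s / 2) by ring,
      cos_neg] at h
    simp only [Function.comp_apply]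
    congr 1
    linear_combination (-2 * ζ) * h
  have hinner : ∀ s, ∫ x in (-π)..π, (1 - 4 * ζ * cos (s / 2) * cos (x + s / 2))⁻¹
      = 2 * π / √(1 - (4 * ζ * cos (s / 2)) ^ 2) := fun s =>
    ((cos_periodic.comp fun t => (1 - 4 * ζ * cos (s / 2) * t)⁻¹
      ).integral_neg_pi_pi_comp_add_right (s / 2)).trans
      (integral_inv_one_sub_mul_cos (hb _ (abs_cos_le_one _)))
  have hcont : Continuous (Function.uncurry fun x s : ℝ =>
      (1 - 4 * ζ * cos (s / 2) * cos (x + s / 2))⁻¹) :=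
    Continuous.inv₀ (by fun_prop) fun p =>
      (one_sub_mul_cos_pos (hb _ (abs_cos_le_one _)) (p.1 + p.2 / 2)).ne'
  have hg : ContinuousOn (fun t => 2 * π / √(1 - (4 * ζ * t) ^ 2)) (Icc (-1) 1) :=
    continuousOn_const.div (by fun_prop) fun t ht => (sqrt_pos.2 (sub_pos.2
      ((sq_lt_one_iff_abs_lt_one _).2 (hb t (abs_le.2 ht))))).ne'
  have hpi : -π ≤ π := by linarith [pi_pos]
  calc _ = ∫ x in (-π)..π, ∫ s in (-π)..π, (1 - 4 * ζ * cos (s / 2) * cos (x + s / 2))⁻¹ :=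
        integral_congr fun x _ => hshift x
    _ = ∫ s in (-π)..π, ∫ x in (-π)..π, (1 - 4 * ζ * cos (s / 2) * cos (x + s / 2))⁻¹ :=
        intervalIntegral_integral_swap hcont hpi hpi
    _ = ∫ s in (-π)..π, 2 * π / √(1 - (4 * ζ * cos (s / 2)) ^ 2) :=
        integral_congr fun s _ => hinner s
    _ = (4 : ℝ) • ∫ θ in 0..π / 2, 2 * π / √(1 - (4 * ζ * sin θ) ^ 2) :=
        integral_comp_cos_half hg
    _ = 8 * π * ellipticK (4 * ζ) := by
        simp_rw [smul_eq_mul, ellipticK_eq_intervalIntegral, div_eq_mul_inv, intervalIntegral.integral_const_mul]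
        ring

/-- The SFCAR spectral density is positive on `(−π,π]²`, integrable, and its integral
(the power `P_s = γ₀₀`) equals `(2/(πκ)) K(4ζ)`. -/
theorem stmt7 (κ ζ : ℝ) (hκ : 0 < κ) (hζ0 : 0 ≤ ζ) (hζ1 : ζ < 1/4) :
    (∀ ω : ℝ × ℝ, ω ∈ (Set.Ioc (-π) π ×ˢ Set.Ioc (-π) π) →
      0 < 1 / (4 * π ^ 2 * κ * (1 - 2 * ζ * Real.cos ω.1 - 2 * ζ * Real.cos ω.2))) ∧
    IntegrableOn
      (fun ω : ℝ × ℝ =>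
        1 / (4 * π ^ 2 * κ * (1 - 2 * ζ * Real.cos ω.1 - 2 * ζ * Real.cos ω.2)))
      (Set.Ioc (-π) π ×ˢ Set.Ioc (-π) π) ∧
    (∫ ω : ℝ × ℝ in (Set.Ioc (-π) π ×ˢ Set.Ioc (-π) π),
        1 / (4 * π ^ 2 * κ * (1 - 2 * ζ * Real.cos ω.1 - 2 * ζ * Real.cos ω.2)))
      = (2 / (π * κ)) * ellipticK (4 * ζ) := by
  have hζ : |ζ| < 1 / 4 := abs_lt.2 ⟨by linarith, hζ1⟩
  have hpos : ∀ ω : ℝ × ℝ,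
      0 < 1 / (4 * π ^ 2 * κ * (1 - 2 * ζ * Real.cos ω.1 - 2 * ζ * Real.cos ω.2)) := fun ω => by
    have := one_sub_two_mul_cos_sub_two_mul_cos_pos hζ ω.1 ω.2
    positivity
  have hcont : Continuous fun ω : ℝ × ℝ =>
      1 / (4 * π ^ 2 * κ * (1 - 2 * ζ * Real.cos ω.1 - 2 * ζ * Real.cos ω.2)) :=
    continuous_const.div (by fun_prop) fun ω => (one_div_pos.1 (hpos ω)).ne'
  have hpi : -π ≤ π := by linarith [pi_pos]
  refine ⟨fun ω _ => hpos ω, integrableOn_Ioc_prod_Ioc hcont _ _ _ _, ?_⟩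
  rw [setIntegral_Ioc_prod_Ioc hcont hpi hpi]
  simp_rw [one_div, mul_inv (4 * π ^ 2 * κ), intervalIntegral.integral_const_mul,
    integral_integral_inv_one_sub_two_mul_cos_sub_two_mul_cos hζ]
  field_simp
  ring
end

section
/- For fixed SNR > 0, as ζ → (1/4)⁻ the asymptotic mutual information rate I_s(ζ) = (1/4π²)∫∫ (1/2)log(1 + SNR/((2/π)K(4ζ)(1 − 2ζcos ω₁ − 2ζcos ω₂))) dω₁dω₂ converges to 0. -/
/-!
The lower bound `K(k) ≥ log (1 + π / (2 √(1 - k²)))`, obtained from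
`√(1 - k² sin² θ) ≤ √(1 - k²) + (π / 2 - θ)`, shows `K(4ζ) → ∞`. For `0 ≤ ζ ≤ 1/4` and `ω` in the
box, `1 - 2ζ cos ω₁ - 2ζ cos ω₂ ≥ ((1 - cos ω₁) + (1 - cos ω₂)) / 4 ≥ ‖ω‖² / (2π²)` (sup norm),
and `log (1 + x) ≤ 2 √x`, so the integrand is at most `√(π³ SNR / K(4ζ)) ‖ω‖⁻¹`. Since `‖ω‖⁻¹`
is integrable near the origin of the plane, `I_s(ζ) = O(K(4ζ)^(-1/2)) → 0`.
-/

open Real MeasureTheory Filter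

/-- Asymptotic mutual information rate of the hidden SFCAR model. -/
noncomputable def Is (ζ snr : ℝ) : ℝ :=
  (1 / (4 * π ^ 2)) *
    ∫ ω : ℝ × ℝ in (Set.Ioc (-π) π ×ˢ Set.Ioc (-π) π),
      (1/2) * Real.log (1 + snr /
        ((2/π) * ellipticK (4 * ζ) * (1 - 2 * ζ * Real.cos ω.1 - 2 * ζ * Real.cos ω.2)))

open Set Topology

lemma Real.log_one_add_le_two_mul_sqrt {x : ℝ} (hx : 0 ≤ x) : log (1 + x) ≤ 2 * √x := by
  rw [log_le_iff_le_exp (by linarith)]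
  nlinarith [quadratic_le_exp_of_nonneg (by positivity : 0 ≤ 2 * √x), sq_sqrt hx, sqrt_nonneg x]

lemma log_one_add_pi_div_le_ellipticK {k : ℝ} (hk : k ^ 2 < 1) :
    log (1 + π / (2 * √(1 - k ^ 2))) ≤ ellipticK k := by
  set ε := √(1 - k ^ 2)
  have hε : 0 < ε := sqrt_pos.2 (by linarith)
  have hε_sq : ε ^ 2 = 1 - k ^ 2 := sq_sqrt (by linarith)
  have hpos : ∀ θ, 0 < 1 - k ^ 2 * sin θ ^ 2 := fun θ => by
    nlinarith [sin_sq_le_one θ, sq_nonneg k]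
  -- `1 - k² sin² θ = ε² + k² cos² θ ≤ (ε + cos θ)²` and `cos θ ≤ π / 2 - θ`
  have hpt : ∀ θ ∈ Ioc 0 (π / 2), 1 / (ε + π / 2 - θ) ≤ 1 / √(1 - k ^ 2 * sin θ ^ 2) := by
    intro θ hθ
    have hcos : 0 ≤ cos θ := cos_nonneg_of_mem_Icc ⟨by linarith [hθ.1, pi_pos], hθ.2⟩
    have hcos_le : cos θ ≤ π / 2 - θ := by
      rw [← sin_pi_div_two_sub]; exact sin_le (by linarith [hθ.2])
    have hsq : √(1 - k ^ 2 * sin θ ^ 2) ≤ ε + cos θ := by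
      rw [sqrt_le_left (by positivity)]
      nlinarith [sin_sq_add_cos_sq θ, mul_nonneg hε.le hcos, sq_nonneg k, sq_nonneg (cos θ)]
    exact one_div_le_one_div_of_le (sqrt_pos.2 (hpos θ)) (by linarith)
  have hint : IntegrableOn (fun θ => 1 / √(1 - k ^ 2 * sin θ ^ 2)) (Ioc 0 (π / 2)) :=
    (continuous_const.div (by fun_prop) fun θ => (sqrt_pos.2 (hpos θ)).ne').integrableOn_Ioc
  have hval : ∫ θ in Ioc 0 (π / 2), 1 / (ε + π / 2 - θ) = log (1 + π / (2 * ε)) := by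
    rw [← intervalIntegral.integral_of_le (by positivity),
      intervalIntegral.integral_comp_sub_left (fun x => 1 / x), integral_one_div_of_pos]
    · congr 1; field_simp; ring
    all_goals linarith [pi_pos]
  have hint' : IntegrableOn (fun θ => 1 / (ε + π / 2 - θ)) (Ioc 0 (π / 2)) :=
    (ContinuousOn.integrableOn_Icc (continuousOn_const.div (by fun_prop)
      fun θ hθ => by linarith [hθ.2])).mono_set Ioc_subset_Icc_self
  rw [← hval]
  exact setIntegral_mono_on hint' hint measurableSet_Ioc hpt

lemma ellipticK_pos {k : ℝ} (hk : k ^ 2 < 1) : 0 < ellipticK k :=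
  (log_pos (lt_add_of_pos_right _ (by have := sqrt_pos.2 (sub_pos.2 hk); positivity))).trans_le
    (log_one_add_pi_div_le_ellipticK hk)

lemma tendsto_ellipticK_nhdsLT_one : Tendsto ellipticK (𝓝[<] 1) atTop := by
  have hk : ∀ᶠ k in 𝓝[<] (1 : ℝ), k ^ 2 < 1 := by
    filter_upwards [Ioo_mem_nhdsLT (show (-1 : ℝ) < 1 by norm_num)] with k hk
    nlinarith [hk.1, hk.2]
  have hε : Tendsto (fun k : ℝ => √(1 - k ^ 2)) (𝓝[<] 1) (𝓝[>] 0) := by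
    refine tendsto_nhdsWithin_iff.2 ⟨?_, ?_⟩
    · have : Tendsto (fun k : ℝ => √(1 - k ^ 2)) (𝓝 1) (𝓝 √(1 - 1 ^ 2)) :=
        (continuous_const.sub (continuous_pow 2)).sqrt.tendsto 1
      simpa using this.mono_left nhdsWithin_le_nhds
    · filter_upwards [hk] with k hk using sqrt_pos.2 (sub_pos.2 hk)
  have hlog : Tendsto (fun ε => log (1 + π / (2 * ε))) (𝓝[>] 0) atTop := by
    have h : Tendsto (fun ε : ℝ => π / 2 * ε⁻¹) (𝓝[>] 0) atTop :=
      tendsto_inv_nhdsGT_zero.const_mul_atTop (by positivity)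
    refine tendsto_log_atTop.comp (tendsto_atTop_add_const_left _ 1 (h.congr fun ε => ?_))
    rw [div_mul_eq_div_div, div_eq_mul_inv _ ε]
  exact tendsto_atTop_mono' _ (hk.mono fun k => log_one_add_pi_div_le_ellipticK) (hlog.comp hε)

lemma one_sub_cos_add_one_sub_cos_div_four_le {ζ : ℝ} (hζ₀ : 0 ≤ ζ) (hζ₁ : ζ ≤ 1 / 4)
    (a b : ℝ) :
    (1 - cos a + (1 - cos b)) / 4 ≤ 1 - 2 * ζ * cos a - 2 * ζ * cos b := by
  nlinarith [neg_one_le_cos a, cos_le_one a, neg_one_le_cos b, cos_le_one b,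
    mul_nonneg hζ₀ (by linarith [cos_le_one a, cos_le_one b] : 0 ≤ 2 - cos a - cos b)]

lemma sq_norm_div_le_one_sub_two_mul_cos_sub {ζ : ℝ} (hζ₀ : 0 ≤ ζ) (hζ₁ : ζ ≤ 1 / 4)
    {ω : ℝ × ℝ} (hω : ‖ω‖ ≤ π) :
    ‖ω‖ ^ 2 / (2 * π ^ 2) ≤ 1 - 2 * ζ * cos ω.1 - 2 * ζ * cos ω.2 := by
  have h₁ : |ω.1| ≤ π := (norm_fst_le ω).trans hω
  have h₂ : |ω.2| ≤ π := (norm_snd_le ω).trans hω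
  have hnorm : ‖ω‖ ^ 2 ≤ ω.1 ^ 2 + ω.2 ^ 2 := by
    rw [Prod.norm_def, Real.norm_eq_abs, Real.norm_eq_abs]
    rcases le_total |ω.1| |ω.2| with h | h
    · rw [max_eq_right h, sq_abs]; nlinarith [sq_nonneg ω.1]
    · rw [max_eq_left h, sq_abs]; nlinarith [sq_nonneg ω.2]
  have hc₁ := cos_le_one_sub_mul_cos_sq h₁
  have hc₂ := cos_le_one_sub_mul_cos_sq h₂
  have hd := one_sub_cos_add_one_sub_cos_div_four_le hζ₀ hζ₁ ω.1 ω.2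
  have hπ : 0 < π ^ 2 := by positivity
  rw [div_le_iff₀ (by positivity)]
  field_simp at hc₁ hc₂
  nlinarith

lemma integrableOn_ball_norm_inv {E : Type*} [NormedAddCommGroup E] [NormedSpace ℝ E]
    [FiniteDimensional ℝ E] [MeasurableSpace E] [BorelSpace E] {μ : Measure E}
    [μ.IsAddHaarMeasure] (hE : 1 < Module.finrank ℝ E) (r : ℝ) :
    IntegrableOn (fun x : E => ‖x‖⁻¹) (Metric.ball 0 r) μ :=
  integrableOn_ball_of_norm_le_rpow hE.le (C := 1) (α := 1) (by exact_mod_cast hE)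
    (Eventually.of_forall fun x => by simp [rpow_neg_one])
    continuous_norm.measurable.inv.aestronglyMeasurable

lemma norm_le_of_mem_Ioc_prod_Ioc {a : ℝ} {ω : ℝ × ℝ} (hω : ω ∈ Ioc (-a) a ×ˢ Ioc (-a) a) :
    ‖ω‖ ≤ a :=
  max_le (abs_le.2 ⟨hω.1.1.le, hω.1.2⟩) (abs_le.2 ⟨hω.2.1.le, hω.2.2⟩)

lemma integrableOn_norm_inv_Ioc_prod_Ioc (a : ℝ) :
    IntegrableOn (fun ω : ℝ × ℝ => ‖ω‖⁻¹) (Ioc (-a) a ×ˢ Ioc (-a) a) :=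
  (integrableOn_ball_norm_inv (by simp) (a + 1)).mono_set fun ω hω =>
    mem_ball_zero_iff.2 ((norm_le_of_mem_Ioc_prod_Ioc hω).trans_lt (lt_add_one a))

lemma tendsto_setIntegral_zero_of_ae_le_mul {α ι : Type*} [MeasurableSpace α] {μ : Measure α}
    {s : Set α} {l : Filter ι} {f : ι → α → ℝ} {g : α → ℝ} {c : ι → ℝ}
    (hg : IntegrableOn g s μ) (hc : Tendsto c l (𝓝 0))
    (hf₀ : ∀ᶠ i in l, 0 ≤ᵐ[μ.restrict s] f i)
    (hfg : ∀ᶠ i in l, f i ≤ᵐ[μ.restrict s] fun x => c i * g x) :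
    Tendsto (fun i => ∫ x in s, f i x ∂μ) l (𝓝 0) := by
  have hlim : Tendsto (fun i => c i * ∫ x in s, g x ∂μ) l (𝓝 0) := by
    simpa using hc.mul_const (∫ x in s, g x ∂μ)
  refine tendsto_of_tendsto_of_tendsto_of_le_of_le' tendsto_const_nhds hlim ?_ ?_
  · filter_upwards [hf₀] with i hi using integral_nonneg_of_ae hi
  · filter_upwards [hf₀, hfg] with i h₀ h
    rw [← integral_const_mul]
    exact integral_mono_of_nonneg h₀ (hg.const_mul _) h

lemma half_log_one_add_div_nonneg {ζ snr K : ℝ} (hζ₀ : 0 ≤ ζ) (hζ₁ : ζ ≤ 1 / 4) (hsnr : 0 ≤ snr)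
    (hK : 0 ≤ K) (ω : ℝ × ℝ) :
    0 ≤ 1 / 2 * log (1 + snr / (2 / π * K * (1 - 2 * ζ * cos ω.1 - 2 * ζ * cos ω.2))) := by
  have hd := one_sub_cos_add_one_sub_cos_div_four_le hζ₀ hζ₁ ω.1 ω.2
  have hd_nonneg : 0 ≤ 1 - 2 * ζ * cos ω.1 - 2 * ζ * cos ω.2 := by
    linarith [cos_le_one ω.1, cos_le_one ω.2]
  exact mul_nonneg (by norm_num)
    (log_nonneg (le_add_of_nonneg_right (div_nonneg hsnr (by positivity))))

lemma half_log_one_add_div_le_mul_norm_inv {ζ snr K : ℝ} (hζ₀ : 0 ≤ ζ) (hζ₁ : ζ ≤ 1 / 4)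
    (hsnr : 0 ≤ snr) (hK : 0 < K) {ω : ℝ × ℝ} (hω : ‖ω‖ ≤ π) (hω₀ : ω ≠ 0) :
    1 / 2 * log (1 + snr / (2 / π * K * (1 - 2 * ζ * cos ω.1 - 2 * ζ * cos ω.2)))
      ≤ √(π ^ 3 * snr / K) * ‖ω‖⁻¹ := by
  have hm : 0 < K * ‖ω‖ ^ 2 / π ^ 3 := by have := norm_pos_iff.2 hω₀; positivity
  have hD : K * ‖ω‖ ^ 2 / π ^ 3 ≤ 2 / π * K * (1 - 2 * ζ * cos ω.1 - 2 * ζ * cos ω.2) := by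
    have h := sq_norm_div_le_one_sub_two_mul_cos_sub hζ₀ hζ₁ hω
    calc K * ‖ω‖ ^ 2 / π ^ 3 = 2 / π * K * (‖ω‖ ^ 2 / (2 * π ^ 2)) := by
          field_simp
      _ ≤ _ := by gcongr
  calc 1 / 2 * log (1 + snr / (2 / π * K * (1 - 2 * ζ * cos ω.1 - 2 * ζ * cos ω.2)))
      ≤ √(snr / (2 / π * K * (1 - 2 * ζ * cos ω.1 - 2 * ζ * cos ω.2))) := by
        linarith [log_one_add_le_two_mul_sqrt (div_nonneg hsnr (hm.le.trans hD))]
    _ ≤ √(snr / (K * ‖ω‖ ^ 2 / π ^ 3)) := by gcongr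
    _ = √(π ^ 3 * snr / K) * ‖ω‖⁻¹ := by
        have : snr / (K * ‖ω‖ ^ 2 / π ^ 3) = π ^ 3 * snr / K * ‖ω‖⁻¹ ^ 2 := by field_simp
        rw [this, sqrt_mul (by positivity), sqrt_sq (by positivity)]

/-- For fixed `SNR > 0`, the asymptotic MI rate vanishes as the edge dependence factor
`ζ → (1/4)⁻` (perfect correlation). -/
theorem stmt10 (snr : ℝ) (hsnr : 0 < snr) :
    Filter.Tendsto (fun ζ => Is ζ snr)
      (nhdsWithin (1/4) (Set.Ico 0 (1/4))) (nhds 0) := by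
  have hζ : ∀ᶠ ζ in 𝓝[Ico 0 (1 / 4)] (1 / 4 : ℝ), ζ ∈ Ico 0 (1 / 4) :=
    self_mem_nhdsWithin
  have hK_pos : ∀ ζ ∈ Ico (0 : ℝ) (1 / 4), 0 < ellipticK (4 * ζ) := fun ζ hζ =>
    ellipticK_pos (by nlinarith [hζ.1, hζ.2])
  have h4ζ : Tendsto (fun ζ : ℝ => 4 * ζ) (𝓝[Ico 0 (1 / 4)] (1 / 4)) (𝓝[<] 1) := by
    refine tendsto_nhdsWithin_iff.2 ⟨?_, hζ.mono fun ζ hζ => mem_Iio.2 (by linarith [hζ.2])⟩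
    exact ((continuous_const_mul 4).tendsto' _ _ (by norm_num)).mono_left nhdsWithin_le_nhds
  have hc : Tendsto (fun ζ => √(π ^ 3 * snr / ellipticK (4 * ζ)))
      (𝓝[Ico 0 (1 / 4)] (1 / 4)) (𝓝 0) := by
    simpa using (tendsto_const_nhds.div_atTop (tendsto_ellipticK_nhdsLT_one.comp h4ζ)).sqrt
  have hint := tendsto_setIntegral_zero_of_ae_le_mul (integrableOn_norm_inv_Ioc_prod_Ioc π) hc
    (hζ.mono fun ζ hζ => Eventually.of_forall
      (half_log_one_add_div_nonneg hζ.1 hζ.2.le hsnr.le (hK_pos ζ hζ).le))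
    (hζ.mono fun ζ hζ => by
      filter_upwards [ae_restrict_mem (measurableSet_Ioc.prod measurableSet_Ioc),
        ae_restrict_of_ae (Measure.ae_ne volume 0)] with ω hω hω₀
      exact half_log_one_add_div_le_mul_norm_inv hζ.1 hζ.2.le hsnr.le (hK_pos ζ hζ)
        (norm_le_of_mem_Ioc_prod_Ioc hω) hω₀)
  have := hint.const_mul (1 / (4 * π ^ 2))
  rwa [mul_zero] at this
end

section
/- The edge correlation factor ρ(d) = α d K₁(α d) is strictly decreasing in the sensor spacing d > 0 for fixed α > 0, and 0 < ρ(d) < 1 for all d > 0. -/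
open Real MeasureTheory

/-- Modified Bessel function of the second kind of order 1 (integral representation). -/
noncomputable def besselK1 (x : ℝ) : ℝ :=
  ∫ t in Set.Ioi (0:ℝ), Real.exp (-x * Real.cosh t) * Real.cosh t

/-!
The substitution `v = x sinh t` turns `x K₁(x)` into `∫₀^∞ exp (-√(x² + v²)) dv`. The integrand
is positive and strictly decreasing in `x ≥ 0`, and at `x = 0` the integral is `∫₀^∞ e^{-v} dv = 1`.
-/

open Set

theorem setIntegral_lt_setIntegral_of_forall_lt {X : Type*} [MeasurableSpace X] {μ : Measure X}
    {s : Set X} {f g : X → ℝ} (hs : MeasurableSet s) (hμs : μ s ≠ 0)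
    (hf : IntegrableOn f s μ) (hg : IntegrableOn g s μ) (hlt : ∀ x ∈ s, f x < g x) :
    ∫ x in s, f x ∂μ < ∫ x in s, g x ∂μ := by
  have hsupport : Function.support (g - f) ∩ s = s :=
    inter_eq_right.mpr fun x hx => sub_ne_zero.mpr (hlt x hx).ne'
  have hpos : 0 < ∫ x in s, (g x - f x) ∂μ := by
    refine (setIntegral_pos_iff_support_of_nonneg_ae ?_ (hg.sub hf)).mpr ?_
    · exact ae_restrict_of_forall_mem hs fun x hx => sub_nonneg.mpr (hlt x hx).le
    · rw [hsupport]
      exact pos_iff_ne_zero.mpr hμs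
  rw [integral_sub hg hf] at hpos
  linarith

noncomputable def expNegHypotIntegral (x : ℝ) : ℝ :=
  ∫ v in Ioi 0, exp (-√(x ^ 2 + v ^ 2))

theorem integrableOn_exp_neg_sqrt_sq_add_sq (x : ℝ) :
    IntegrableOn (fun v => exp (-√(x ^ 2 + v ^ 2))) (Ioi 0) := by
  refine Integrable.mono' (exp_neg_integrableOn_Ioi 0 one_pos) (by fun_prop) ?_
  filter_upwards [ae_restrict_mem measurableSet_Ioi] with v hv
  rw [norm_of_nonneg (exp_pos _).le, neg_one_mul, exp_le_exp, neg_le_neg_iff]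
  calc v = √(v ^ 2) := (sqrt_sq (le_of_lt hv)).symm
    _ ≤ √(x ^ 2 + v ^ 2) := sqrt_le_sqrt (by nlinarith)

theorem expNegHypotIntegral_zero : expNegHypotIntegral 0 = 1 := by
  rw [← integral_exp_neg_Ioi_zero, expNegHypotIntegral]
  refine setIntegral_congr_fun measurableSet_Ioi fun v hv => ?_
  rw [zero_pow two_ne_zero, zero_add, sqrt_sq (le_of_lt hv)]

theorem expNegHypotIntegral_pos (x : ℝ) : 0 < expNegHypotIntegral x := by
  simpa [expNegHypotIntegral] using setIntegral_lt_setIntegral_of_forall_lt measurableSet_Ioi (by simp)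
    integrableOn_zero (integrableOn_exp_neg_sqrt_sq_add_sq x) fun v _ => exp_pos _

theorem strictAntiOn_expNegHypotIntegral : StrictAntiOn expNegHypotIntegral (Ici 0) := by
  intro x hx y _ hxy
  refine setIntegral_lt_setIntegral_of_forall_lt measurableSet_Ioi (by simp)
    (integrableOn_exp_neg_sqrt_sq_add_sq y) (integrableOn_exp_neg_sqrt_sq_add_sq x) fun v _ => ?_
  have hsq : x ^ 2 < y ^ 2 := pow_lt_pow_left₀ hxy hx two_ne_zero
  rw [exp_lt_exp, neg_lt_neg_iff]
  exact sqrt_lt_sqrt (by positivity) (by linarith)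

theorem sqrt_sq_add_sq_mul_sinh {x : ℝ} (hx : 0 ≤ x) (t : ℝ) :
    √(x ^ 2 + (x * sinh t) ^ 2) = x * cosh t := by
  have h : x ^ 2 + (x * sinh t) ^ 2 = (x * cosh t) ^ 2 := by
    rw [mul_pow, mul_pow, cosh_sq']
    ring
  rw [h, sqrt_sq (by positivity)]

theorem image_mul_sinh_Ioi {x : ℝ} (hx : 0 < x) : (fun t => x * sinh t) '' Ioi 0 = Ioi 0 := by
  ext v
  constructor
  · rintro ⟨t, ht, rfl⟩
    exact mul_pos hx (sinh_pos_iff.mpr ht)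
  · intro hv
    refine ⟨arsinh (v / x), arsinh_pos_iff.mpr (div_pos hv hx), ?_⟩
    simp only [sinh_arsinh]
    field_simp

theorem mul_besselK1_eq_expNegHypotIntegral {x : ℝ} (hx : 0 < x) :
    x * besselK1 x = expNegHypotIntegral x := by
  have hderiv : ∀ t ∈ Ioi (0:ℝ),
      HasDerivWithinAt (fun t => x * sinh t) (x * cosh t) (Ioi 0) t :=
    fun t _ => ((hasDerivAt_sinh t).const_mul x).hasDerivWithinAt
  have hinj : InjOn (fun t => x * sinh t) (Ioi 0) := fun a _ b _ h =>
    sinh_injective (mul_left_cancel₀ hx.ne' h)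
  rw [expNegHypotIntegral, ← image_mul_sinh_Ioi hx,
    integral_image_eq_integral_abs_deriv_smul measurableSet_Ioi hderiv hinj, besselK1,
    ← integral_const_mul]
  refine setIntegral_congr_fun measurableSet_Ioi fun t _ => ?_
  rw [smul_eq_mul, sqrt_sq_add_sq_mul_sinh hx.le, abs_of_pos (mul_pos hx (cosh_pos t)), neg_mul]
  ring

theorem strictAntiOn_mul_besselK1 : StrictAntiOn (fun x => x * besselK1 x) (Ioi 0) :=
  (strictAntiOn_expNegHypotIntegral.mono Ioi_subset_Ici_self).congr
    fun _ hx => (mul_besselK1_eq_expNegHypotIntegral hx).symm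

theorem mul_besselK1_pos {x : ℝ} (hx : 0 < x) : 0 < x * besselK1 x := by
  rw [mul_besselK1_eq_expNegHypotIntegral hx]
  exact expNegHypotIntegral_pos x

theorem mul_besselK1_lt_one {x : ℝ} (hx : 0 < x) : x * besselK1 x < 1 := by
  rw [mul_besselK1_eq_expNegHypotIntegral hx, ← expNegHypotIntegral_zero]
  exact strictAntiOn_expNegHypotIntegral self_mem_Ici hx.le hx

/-- For fixed `α > 0`, the edge correlation factor `ρ(d) = α d K₁(α d)` is strictly
decreasing in the sensor spacing `d > 0`, and `0 < ρ(d) < 1` for all `d > 0`. -/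
theorem stmt15 (α : ℝ) (hα : 0 < α) :
    StrictAntiOn (fun d : ℝ => α * d * besselK1 (α * d)) (Set.Ioi 0) ∧
    ∀ d : ℝ, 0 < d →
      0 < α * d * besselK1 (α * d) ∧ α * d * besselK1 (α * d) < 1 := by
  have hscale : MapsTo (fun d : ℝ => α * d) (Ioi 0) (Ioi 0) := fun _ hd => mul_pos hα hd
  refine ⟨?_, fun d hd => ⟨mul_besselK1_pos (hscale hd), mul_besselK1_lt_one (hscale hd)⟩⟩
  exact strictAntiOn_mul_besselK1.comp_strictMonoOn
    ((strictMono_mul_left_of_pos hα).strictMonoOn _) hscale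
end
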